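/- arXiv:1911.06705 — 2 statements merged into one kernel-verified Lean document; each statement's English description precedes it below -/
import Mathlib

section
/- A simple digraph D satisfies F(D) = 0 if and only if D is a directed cycle. -/
/-- The set of out-neighbors of `v` in the digraph with arc relation `A`. -/
def Nout {V : Type} (A : V → V → Prop) (v : V) : Set V := {w | A v w}

/-- The set of in-neighbors of `v`. -/
def Nin {V : Type} (A : V → V → Prop) (v : V) : Set V := {w | A w v}

/-- One application of the color change rule to the set `S` of filled vertices. -/
def Bstep {V : Type} (A : V → V → Prop) (S : Set V) : Set V :=
  S ∪ {w | ∃ v ∈ S, Nout A v \ S = {w}}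

/-- `S` is a zero forcing set: iterating the color change rule fills all vertices. -/
def IsZFS {V : Type} (A : V → V → Prop) (S : Set V) : Prop :=
  ∃ t, (Bstep A)^[t] S = Set.univ

/-- The failed zero forcing number: the maximum cardinality of a failed zero forcing set. -/
noncomputable def Fnum {V : Type} (A : V → V → Prop) : ℕ :=
  sSup {k | ∃ S : Set V, ¬ IsZFS A S ∧ S.ncard = k}

/-- The zero forcing number: the minimum cardinality of a zero forcing set. -/
noncomputable def Znum {V : Type} (A : V → V → Prop) : ℕ :=
  sInf {k | ∃ S : Set V, IsZFS A S ∧ S.ncard = k}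

/-- `W` is a critical set: `W` is nonempty and no vertex outside `W` has exactly one
out-neighbor in `W`. -/
def IsCritical {V : Type} (A : V → V → Prop) (W : Set V) : Prop :=
  W.Nonempty ∧ ∀ v ∈ Wᶜ, (Nout A v ∩ W).ncard ≠ 1

/-- `D` is a directed cycle: either a single vertex with no arcs, or the vertices can be
cyclically labeled so that the arcs are exactly the consecutive ones. -/
def IsDirectedCycle {V : Type} [Fintype V] (A : V → V → Prop) : Prop :=
  (Fintype.card V = 1 ∧ ∀ u v : V, ¬ A u v) ∨
  (2 ≤ Fintype.card V ∧ ∃ e : ZMod (Fintype.card V) ≃ V,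
      ∀ i j : ZMod (Fintype.card V), A (e i) (e j) ↔ j = i + 1)

/-!
A filled set from which no vertex can be forced is exactly the complement of a critical set, so
`F(D) = 0` says that the only critical set is the whole vertex set. If a vertex `v` had out-degree
other than one, `{v}ᶜ` would be critical (irreflexivity keeps `v` out of its own out-neighborhood);
hence the arcs are `v → f v` for a function `f`, and a set is critical iff its complement is
`f`-invariant. So the whole vertex set is the only critical set iff a single `f`-orbit covers all
vertices, and labelling the vertices `f^[k] x` with `k` taken modulo the minimal period of `x`
exhibits `D` as a directed cycle on `ZMod n`.
-/

open Set Function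

section ColorChange

variable {V : Type} (A : V → V → Prop)

lemma subset_bstep (S : Set V) : S ⊆ Bstep A S :=
  subset_union_left

lemma exists_bstep_iterate_fixed [Finite V] (S : Set V) :
    ∃ t, Bstep A ((Bstep A)^[t] S) = (Bstep A)^[t] S := by
  let chain : ℕ →o Set V :=
    ⟨fun t => (Bstep A)^[t] S, fun _ _ h => monotone_iterate_of_id_le (subset_bstep A) h S⟩
  obtain ⟨t, ht⟩ := WellFoundedGT.monotone_chain_condition chain
  refine ⟨t, ?_⟩
  rw [← iterate_succ_apply' (Bstep A)]
  exact (ht (t + 1) t.le_succ).symm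

lemma isCritical_iff_bstep_compl (W : Set V) :
    IsCritical A W ↔ W.Nonempty ∧ Bstep A Wᶜ = Wᶜ := by
  unfold IsCritical Bstep
  refine and_congr_right fun _ => ?_
  simp only [union_eq_left, ofPred_subset, sdiff_compl, ne_eq, ncard_eq_one, not_exists]
  constructor
  · rintro h w ⟨v, hv, hvw⟩
    exact (h v hv w hvw).elim
  · rintro h v hv w hvw
    exact h w ⟨v, hv, hvw⟩ (hvw.symm.subset rfl).2

lemma fnum_eq_zero_iff_forall_isZFS [Finite V] :
    Fnum A = 0 ↔ ∀ S : Set V, S.Nonempty → IsZFS A S := by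
  have hbdd : BddAbove {k | ∃ S : Set V, ¬ IsZFS A S ∧ S.ncard = k} :=
    ⟨Nat.card V, by rintro k ⟨S, -, rfl⟩; exact ncard_le_card S⟩
  constructor
  · intro h S hS
    by_contra hnz
    have := le_csSup hbdd ⟨S, hnz, rfl⟩
    rw [Fnum] at h
    rw [h, Nat.le_zero, ncard_eq_zero] at this
    exact hS.ne_empty this
  · intro h
    refine Nat.eq_zero_of_le_zero (csSup_le' ?_)
    rintro k ⟨S, hS, rfl⟩
    rw [nonpos_iff_eq_zero, ncard_eq_zero, ← not_nonempty_iff_eq_empty]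
    exact fun hne => hS (h S hne)

lemma forall_isZFS_iff_forall_isCritical [Finite V] :
    (∀ S : Set V, S.Nonempty → IsZFS A S) ↔ ∀ W : Set V, IsCritical A W → W = univ := by
  constructor
  · intro h W hW
    obtain ⟨⟨w, hw⟩, hfix⟩ := (isCritical_iff_bstep_compl A W).1 hW
    by_contra hWu
    obtain ⟨t, ht⟩ := h Wᶜ (nonempty_compl.2 hWu)
    rw [iterate_fixed hfix] at ht
    exact (ht ▸ mem_univ w : w ∈ Wᶜ) hw
  · intro h S ⟨v, hv⟩
    obtain ⟨t, ht⟩ := exists_bstep_iterate_fixed A S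
    refine ⟨t, by_contra fun hne => ?_⟩
    have hcrit := (isCritical_iff_bstep_compl A _).2 ⟨nonempty_compl.2 hne, by rwa [compl_compl]⟩
    have hvt : v ∈ (Bstep A)^[t] S := monotone_iterate_of_id_le (subset_bstep A) t.zero_le S hv
    exact (h _ hcrit ▸ mem_univ v : v ∈ ((Bstep A)^[t] S)ᶜ) hvt

end ColorChange

section Functional

variable {V : Type} {A : V → V → Prop} {f : V → V}

lemma isCritical_iff_of_functional (hf : ∀ v w, A v w ↔ w = f v) (W : Set V) :
    IsCritical A W ↔ W.Nonempty ∧ MapsTo f Wᶜ Wᶜ := by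
  have hNout : ∀ v, Nout A v = {f v} := fun v => ext fun w => hf v w
  refine and_congr_right fun _ => forall₂_congr fun v _ => ?_
  by_cases hv : f v ∈ W <;> simp [hNout, hv]

lemma forall_isCritical_eq_univ_iff_of_functional (hf : ∀ v w, A v w ↔ w = f v) :
    (∀ W : Set V, IsCritical A W → W = univ) ↔ ∀ x y : V, ∃ k, f^[k] x = y := by
  simp only [isCritical_iff_of_functional hf]
  constructor
  · intro h x y
    by_contra! hy
    have horbit : MapsTo f (range (f^[·] x)) (range (f^[·] x)) := by
      rintro _ ⟨k, rfl⟩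
      exact ⟨k + 1, iterate_succ_apply' f k x⟩
    have := h (range (f^[·] x))ᶜ ⟨⟨y, fun ⟨k, hk⟩ => hy k hk⟩, by rwa [compl_compl]⟩
    exact (this ▸ mem_univ x : x ∈ (range (f^[·] x))ᶜ) ⟨0, rfl⟩
  · rintro h W ⟨⟨y, hy⟩, hinv⟩
    refine eq_univ_of_forall fun x => by_contra fun hx => ?_
    obtain ⟨k, rfl⟩ := h x y
    exact hinv.iterate k hx hy

lemma exists_nout_eq_singleton [Nontrivial V] (hA : Irreflexive A)
    (h : ∀ W : Set V, IsCritical A W → W = univ) (v : V) : ∃ w, Nout A v = {w} := by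
  by_contra hv
  have hcrit : IsCritical A {v}ᶜ := by
    refine ⟨exists_ne v, ?_⟩
    rintro u hu
    rw [compl_compl, mem_singleton_iff] at hu
    subst hu
    rwa [← sdiff_eq, sdiff_singleton_eq_self (show u ∉ Nout A u from hA u), ne_eq, ncard_eq_one]
  exact (h _ hcrit ▸ mem_univ v : v ∈ ({v}ᶜ : Set V)) rfl

end Functional

section CyclicLabeling

variable {V : Type} {f : V → V}

lemma iterate_apply_of_zmod_equiv {n : ℕ} (e : ZMod n ≃ V) (he : ∀ i, e (i + 1) = f (e i))
    (i : ZMod n) (k : ℕ) : f^[k] (e i) = e (i + k) := by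
  induction k with
  | zero => simp
  | succ k ih => rw [iterate_succ_apply', ih, ← he, Nat.cast_succ, add_assoc]

lemma exists_iterate_eq_of_zmod_equiv {n : ℕ} [NeZero n] (e : ZMod n ≃ V)
    (he : ∀ i, e (i + 1) = f (e i)) (x y : V) : ∃ k, f^[k] x = y := by
  obtain ⟨i, rfl⟩ := e.surjective x
  obtain ⟨j, rfl⟩ := e.surjective y
  exact ⟨(j - i).val, by rw [iterate_apply_of_zmod_equiv e he, ZMod.natCast_zmod_val, add_sub_cancel]⟩

lemma exists_zmod_equiv_of_forall_iterate [Fintype V] [Nonempty V]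
    (h : ∀ x y : V, ∃ k, f^[k] x = y) :
    ∃ e : ZMod (Fintype.card V) ≃ V, ∀ i, e (i + 1) = f (e i) := by
  classical
  obtain ⟨x⟩ := ‹Nonempty V›
  set n := Fintype.card V
  have hper : x ∈ periodicPts f := by
    obtain ⟨k, hk⟩ := h (f x) x
    exact ⟨k + 1, k.succ_pos, by rwa [IsPeriodicPt, IsFixedPt, iterate_succ_apply]⟩
  have himage : (Finset.range (minimalPeriod f x)).image (f^[·] x) = Finset.univ :=
    Finset.eq_univ_of_forall fun y => by
      obtain ⟨k, rfl⟩ := h x y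
      exact Finset.mem_image.2 ⟨k % minimalPeriod f x,
        Finset.mem_range.2 (Nat.mod_lt _ (minimalPeriod_pos_of_mem_periodicPts hper)),
        iterate_mod_minimalPeriod_eq⟩
  have hn : minimalPeriod f x = n := by
    have hinj : InjOn (f^[·] x) (Finset.range (minimalPeriod f x)) := by
      simpa using iterate_injOn_Iio_minimalPeriod
    rw [← Finset.card_range (minimalPeriod f x), ← Finset.card_image_of_injOn hinj, himage,
      Finset.card_univ]
  have hmod : ∀ k, f^[k % n] x = f^[k] x := fun k => hn ▸ iterate_mod_minimalPeriod_eq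
  let e : ZMod n → V := fun i => f^[i.val] x
  have hsucc : ∀ i, e (i + 1) = f (e i) := fun i => by
    simp only [e, ZMod.val_add, ZMod.val_one_eq_one_mod, Nat.add_mod_mod, hmod,
      iterate_succ_apply']
  have hsurj : Surjective e := fun y => by
    obtain ⟨k, rfl⟩ := h x y
    exact ⟨k, by simp only [e, ZMod.val_natCast, hmod]⟩
  exact ⟨Equiv.ofBijective e ((Fintype.bijective_iff_surjective_and_card e).2
    ⟨hsurj, ZMod.card n⟩), hsucc⟩

end CyclicLabeling

lemma isDirectedCycle_iff_of_nontrivial {V : Type} [Fintype V] [Nontrivial V]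
    (A : V → V → Prop) :
    IsDirectedCycle A ↔ ∃ e : ZMod (Fintype.card V) ≃ V, ∀ i j, A (e i) (e j) ↔ j = i + 1 :=
  have hcard : 1 < Fintype.card V := Fintype.one_lt_card
  ⟨fun h => (h.resolve_left fun h1 => hcard.ne' h1.1).2, fun h => Or.inr ⟨hcard, h⟩⟩

lemma forall_isCritical_eq_univ_iff_isDirectedCycle {V : Type} [Fintype V] [Nontrivial V]
    {A : V → V → Prop} (hA : Irreflexive A) :
    (∀ W : Set V, IsCritical A W → W = univ) ↔ IsDirectedCycle A := by
  rw [isDirectedCycle_iff_of_nontrivial]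
  constructor
  · intro h
    choose f hf using exists_nout_eq_singleton hA h
    have hAf : ∀ v w, A v w ↔ w = f v := fun v w => Set.ext_iff.1 (hf v) w
    obtain ⟨e, he⟩ := exists_zmod_equiv_of_forall_iterate
      ((forall_isCritical_eq_univ_iff_of_functional hAf).1 h)
    exact ⟨e, fun i j => by rw [hAf, ← he, e.injective.eq_iff]⟩
  · rintro ⟨e, he⟩
    have hAf : ∀ v w, A v w ↔ w = e (e.symm v + 1) := by
      simp only [e.surjective.forall, he, e.symm_apply_apply, e.injective.eq_iff, implies_true]
    exact (forall_isCritical_eq_univ_iff_of_functional hAf).2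
      (exists_iterate_eq_of_zmod_equiv e fun i => by rw [e.symm_apply_apply])

theorem stmt_6 {V : Type} [Fintype V] [Nonempty V] (A : V → V → Prop)
    (hA : Irreflexive A) :
    Fnum A = 0 ↔ IsDirectedCycle A := by
  rw [fnum_eq_zero_iff_forall_isZFS, forall_isZFS_iff_forall_isCritical]
  rcases subsingleton_or_nontrivial V with hV | hV
  · have hcard : Fintype.card V = 1 :=
      le_antisymm (Fintype.card_le_one_iff_subsingleton.2 hV) Fintype.card_pos
    exact iff_of_true (fun W hW => hW.1.eq_univ)
      (Or.inl ⟨hcard, fun u v huv => hA v (Subsingleton.elim u v ▸ huv)⟩)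
  · exact forall_isCritical_eq_univ_iff_isDirectedCycle hA
end

section
/- The statements F(D) < Z(D), F(D) = Z(D) − 1, and 'S ⊆ V(D) is a zero forcing set if and only if |S| ≥ Z(D)' are all equivalent for a simple digraph D. -/
/-!
The empty set forces nothing, so `Z(D) ≥ 1`, and by minimality of `Z(D)` every set of size
`Z(D) - 1` is failed, so `F(D) ≥ Z(D) - 1` for every digraph. Hence `F(D) < Z(D)` says exactly
`F(D) = Z(D) - 1`. It also says that every set of size at least `Z(D)` is zero forcing; conversely,
a failed set of size `F(D)` is not zero forcing, so the cardinality criterion forces `F(D) < Z(D)`.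
-/

section ZeroForcing

variable {V : Type} (A : V → V → Prop)

lemma Bstep_empty : Bstep A ∅ = ∅ := by
  simp [Bstep]

lemma not_isZFS_empty [Nonempty V] : ¬ IsZFS A ∅ := by
  rintro ⟨t, ht⟩
  rw [Function.iterate_fixed (Bstep_empty A)] at ht
  exact Set.empty_ne_univ ht

lemma isZFS_univ : IsZFS A Set.univ := ⟨0, rfl⟩

lemma Znum_le_ncard {S : Set V} (hS : IsZFS A S) : Znum A ≤ S.ncard :=
  Nat.sInf_le ⟨S, hS, rfl⟩

lemma exists_isZFS_ncard_eq_Znum : ∃ S : Set V, IsZFS A S ∧ S.ncard = Znum A :=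
  Nat.sInf_mem (s := {k | ∃ S : Set V, IsZFS A S ∧ S.ncard = k})
    ⟨_, Set.univ, isZFS_univ A, rfl⟩

variable [Fintype V]

lemma bddAbove_ncard_not_isZFS : BddAbove {k | ∃ S : Set V, ¬ IsZFS A S ∧ S.ncard = k} :=
  ⟨Nat.card V, by rintro k ⟨S, -, rfl⟩; exact Set.ncard_le_card S⟩

lemma ncard_le_Fnum {S : Set V} (hS : ¬ IsZFS A S) : S.ncard ≤ Fnum A :=
  le_csSup (bddAbove_ncard_not_isZFS A) ⟨S, hS, rfl⟩

lemma exists_not_isZFS_ncard_eq_Fnum [Nonempty V] :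
    ∃ S : Set V, ¬ IsZFS A S ∧ S.ncard = Fnum A :=
  Nat.sSup_mem (s := {k | ∃ S : Set V, ¬ IsZFS A S ∧ S.ncard = k})
    ⟨0, ∅, not_isZFS_empty A, Set.ncard_empty V⟩ (bddAbove_ncard_not_isZFS A)

lemma Znum_pos [Nonempty V] : 0 < Znum A := by
  obtain ⟨S, hS, hcard⟩ := exists_isZFS_ncard_eq_Znum A
  refine Nat.pos_of_ne_zero fun hZ => not_isZFS_empty A ?_
  rwa [← (Set.ncard_eq_zero).mp (hcard.trans hZ)]

lemma Znum_le_Fnum_add_one : Znum A ≤ Fnum A + 1 := by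
  obtain hZ | hZ := Nat.eq_zero_or_pos (Znum A)
  · omega
  have hZ_le : Znum A - 1 ≤ (Set.univ : Set V).ncard :=
    (Nat.sub_le _ _).trans (Znum_le_ncard A (isZFS_univ A))
  obtain ⟨T, -, hT⟩ := Set.exists_subset_card_eq hZ_le
  have hT_failed : ¬ IsZFS A T := fun h => by
    have := Znum_le_ncard A h
    omega
  have := ncard_le_Fnum A hT_failed
  omega

end ZeroForcing

theorem stmt_11_general {V : Type} [Fintype V] [Nonempty V] (A : V → V → Prop) :
    (Fnum A < Znum A ↔ Fnum A = Znum A - 1) ∧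
    (Fnum A < Znum A ↔ ∀ S : Set V, IsZFS A S ↔ Znum A ≤ S.ncard) := by
  have hZ := Znum_pos A
  have hZF := Znum_le_Fnum_add_one A
  refine ⟨by omega, fun hFZ S => ⟨Znum_le_ncard A, fun hS => ?_⟩, fun h => ?_⟩
  · by_contra hfailed
    have := ncard_le_Fnum A hfailed
    omega
  · obtain ⟨S, hfailed, hS⟩ := exists_not_isZFS_ncard_eq_Fnum A
    by_contra! hle
    exact hfailed ((h S).2 (hS ▸ hle))

theorem stmt_11 {V : Type} [Fintype V] [Nonempty V] (A : V → V → Prop)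
    (hA : Irreflexive A) :
    (Fnum A < Znum A ↔ Fnum A = Znum A - 1) ∧
    (Fnum A < Znum A ↔ ∀ S : Set V, IsZFS A S ↔ Znum A ≤ S.ncard) :=
  stmt_11_general A
end
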